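/- arXiv:1406.0208 — 2 statements merged into one kernel-verified Lean document; each statement's English description precedes it below -/
import Mathlib

section
/- Let a ≠ 0, h ∈ ℝ, and H(x,y) = y²/2 + x²/2 − (2/3)x³ + (a/4)x⁴. Let ℓ be a linear functional on polynomial 1-forms P(x,y)dx + Q(x,y)dy satisfying: (i) ℓ(dF) = 0 for every polynomial F (i.e. ℓ(F_x dx + F_y dy) = 0), and (ii) ℓ(H·ω) = h·ℓ(ω) for every polynomial 1-form ω. Then ℓ(y³ dx) = (12/7)h·ℓ(y dx) − (2/(7a))·ℓ(x y dx) + (4/(7a) − 3/7)·ℓ(x² y dx). -/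
open MvPolynomial

/-- A polynomial 1-form `P dx + Q dy` is a pair of real bivariate polynomials. -/
abbrev OneForm : Type := MvPolynomial (Fin 2) ℝ × MvPolynomial (Fin 2) ℝ

/-- The quartic Hamiltonian `H = y²/2 + x²/2 − (2/3)x³ + (a/4)x⁴`. -/
noncomputable def Hpoly (a : ℝ) : MvPolynomial (Fin 2) ℝ :=
  C (1/2 : ℝ) * (X 1)^2 + C (1/2 : ℝ) * (X 0)^2 - C (2/3 : ℝ) * (X 0)^3 + C (a/4) * (X 0)^4

/-!
Every exact monomial form `d(xⁱ⁺¹yʲ⁺¹)`, `d(yʲ⁺¹)` and every product `H·ω` gives a linear relation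
among the values of `ℓ` on monomial forms. The relations coming from `d(y)`, `d(y³)`, `d(xⁱ⁺¹y)`
(`i ≤ 4`), `d(xy³)` and from `H·(y dx)`, `H·dy`, `H·(x dy)` eliminate all monomials except
`y dx`, `xy dx`, `x²y dx`; the coefficient `a` of `x⁴` has to be inverted in the last step.
-/

theorem map_Hpoly_mul (f : MvPolynomial (Fin 2) ℝ →ₗ[ℝ] ℝ) (a : ℝ) (P : MvPolynomial (Fin 2) ℝ) :
    f (Hpoly a * P) = 1/2 * f (X 1 ^ 2 * P) + 1/2 * f (X 0 ^ 2 * P)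
      - 2/3 * f (X 0 ^ 3 * P) + a/4 * f (X 0 ^ 4 * P) := by
  simp only [Hpoly, add_mul, sub_mul, C_mul', map_add, map_sub, smul_mul_assoc, map_smul,
    smul_eq_mul]

theorem map_fst_Hpoly_mul (ℓ : OneForm →ₗ[ℝ] ℝ) (a : ℝ) (P : MvPolynomial (Fin 2) ℝ) :
    ℓ (Hpoly a * P, 0) = 1/2 * ℓ (X 1 ^ 2 * P, 0) + 1/2 * ℓ (X 0 ^ 2 * P, 0)
      - 2/3 * ℓ (X 0 ^ 3 * P, 0) + a/4 * ℓ (X 0 ^ 4 * P, 0) :=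
  map_Hpoly_mul (ℓ ∘ₗ LinearMap.inl ℝ _ _) a P

theorem map_snd_Hpoly_mul (ℓ : OneForm →ₗ[ℝ] ℝ) (a : ℝ) (Q : MvPolynomial (Fin 2) ℝ) :
    ℓ (0, Hpoly a * Q) = 1/2 * ℓ (0, X 1 ^ 2 * Q) + 1/2 * ℓ (0, X 0 ^ 2 * Q)
      - 2/3 * ℓ (0, X 0 ^ 3 * Q) + a/4 * ℓ (0, X 0 ^ 4 * Q) :=
  map_Hpoly_mul (ℓ ∘ₗ LinearMap.inr ℝ _ _) a Q

section
variable {ℓ : OneForm →ₗ[ℝ] ℝ}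

theorem map_fst_pderiv_add_map_snd_pderiv
    (hexact : ∀ F : MvPolynomial (Fin 2) ℝ, ℓ (pderiv 0 F, pderiv 1 F) = 0)
    (F : MvPolynomial (Fin 2) ℝ) : ℓ (pderiv 0 F, 0) + ℓ (0, pderiv 1 F) = 0 := by
  rw [← map_add, Prod.mk_add_mk, add_zero, zero_add, hexact]

theorem map_C_mul_fst (c : ℝ) (P : MvPolynomial (Fin 2) ℝ) : ℓ (C c * P, 0) = c * ℓ (P, 0) := by
  simpa [C_mul'] using map_smul ℓ c (P, 0)

theorem map_C_mul_snd (c : ℝ) (Q : MvPolynomial (Fin 2) ℝ) : ℓ (0, C c * Q) = c * ℓ (0, Q) := by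
  simpa [C_mul'] using map_smul ℓ c (0, Q)

theorem map_d_X_zero_pow_mul_X_one_pow
    (hexact : ∀ F : MvPolynomial (Fin 2) ℝ, ℓ (pderiv 0 F, pderiv 1 F) = 0) (i j : ℕ) :
    (i + 1 : ℝ) * ℓ (X 0 ^ i * X 1 ^ (j + 1), 0)
      + (j + 1 : ℝ) * ℓ (0, X 0 ^ (i + 1) * X 1 ^ j) = 0 := by
  have hx : pderiv 0 (X 0 ^ (i + 1) * X 1 ^ (j + 1) : MvPolynomial (Fin 2) ℝ)
      = C ((i : ℝ) + 1) * (X 0 ^ i * X 1 ^ (j + 1)) := by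
    simp; ring
  have hy : pderiv 1 (X 0 ^ (i + 1) * X 1 ^ (j + 1) : MvPolynomial (Fin 2) ℝ)
      = C ((j : ℝ) + 1) * (X 0 ^ (i + 1) * X 1 ^ j) := by
    simp; ring
  have h := map_fst_pderiv_add_map_snd_pderiv hexact (X 0 ^ (i + 1) * X 1 ^ (j + 1))
  rwa [hx, hy, map_C_mul_fst, map_C_mul_snd] at h

theorem map_snd_X_one_pow_eq_zero
    (hexact : ∀ F : MvPolynomial (Fin 2) ℝ, ℓ (pderiv 0 F, pderiv 1 F) = 0) (j : ℕ) :
    ℓ (0, X 1 ^ j) = 0 := by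
  have h := map_fst_pderiv_add_map_snd_pderiv hexact (X 1 ^ (j + 1))
  rw [show pderiv 0 (X 1 ^ (j + 1) : MvPolynomial (Fin 2) ℝ) = 0 by simp,
    show pderiv 1 (X 1 ^ (j + 1) : MvPolynomial (Fin 2) ℝ) = C ((j : ℝ) + 1) * X 1 ^ j by
      simp, map_C_mul_snd, Prod.mk_zero_zero, map_zero, zero_add] at h
  exact (mul_eq_zero.mp h).resolve_left (by positivity)
end

theorem stmt_2 (a : ℝ) (ha : a ≠ 0) (h : ℝ)
    (ℓ : OneForm →ₗ[ℝ] ℝ)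
    (hexact : ∀ F : MvPolynomial (Fin 2) ℝ, ℓ (pderiv 0 F, pderiv 1 F) = 0)
    (hmul : ∀ ω : OneForm, ℓ (Hpoly a * ω.1, Hpoly a * ω.2) = h * ℓ ω) :
    ℓ ((X 1)^3, 0)
      = (12/7) * h * ℓ (X 1, 0)
        - (2/(7*a)) * ℓ (X 0 * X 1, 0)
        + (4/(7*a) - 3/7) * ℓ ((X 0)^2 * X 1, 0) := by
  have hmul₁ (P : MvPolynomial (Fin 2) ℝ) : ℓ (Hpoly a * P, 0) = h * ℓ (P, 0) := by
    simpa using hmul (P, 0)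
  have hmul₂ (Q : MvPolynomial (Fin 2) ℝ) : ℓ (0, Hpoly a * Q) = h * ℓ (0, Q) := by
    simpa using hmul (0, Q)
  have mul_y_dx := (map_fst_Hpoly_mul ℓ a (X 1)).symm.trans (hmul₁ (X 1))
  have mul_dy := (map_snd_Hpoly_mul ℓ a 1).symm.trans (hmul₂ 1)
  have mul_x_dy := (map_snd_Hpoly_mul ℓ a (X 0)).symm.trans (hmul₂ (X 0))
  have d_y := map_snd_X_one_pow_eq_zero hexact 0
  have d_y3 := map_snd_X_one_pow_eq_zero hexact 2
  have d_xy := map_d_X_zero_pow_mul_X_one_pow hexact 0 0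
  have d_x2y := map_d_X_zero_pow_mul_X_one_pow hexact 1 0
  have d_x3y := map_d_X_zero_pow_mul_X_one_pow hexact 2 0
  have d_x4y := map_d_X_zero_pow_mul_X_one_pow hexact 3 0
  have d_x5y := map_d_X_zero_pow_mul_X_one_pow hexact 4 0
  have d_xy3 := map_d_X_zero_pow_mul_X_one_pow hexact 0 2
  have key : 7 * a * ℓ ((X 1)^3, 0)
      = 12 * a * h * ℓ (X 1, 0) - 2 * ℓ (X 0 * X 1, 0)
        + (4 - 3 * a) * ℓ ((X 0)^2 * X 1, 0) := by
    linear_combination (norm := ring_nf)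
      (-2 * h) * d_y + d_y3 + (3 * a * h) * d_xy + d_x2y + (-4/3 - 3 * a/2) * d_x3y
      + (5 * a/2) * d_x4y + (-3 * a^2/4) * d_x5y + (-a/2) * d_xy3
      + (15 * a) * mul_y_dx + (-2) * mul_dy + (3 * a) * mul_x_dy
  field_simp
  linear_combination key
end

section
/- Let a ≠ 0, h ∈ ℝ, H(x,y) = y²/2 + x²/2 − (2/3)x³ + (a/4)x⁴, and let ℓ be a linear functional on polynomial 1-forms with ℓ(dF) = 0 for all polynomials F and ℓ(H·ω) = h·ℓ(ω) for all polynomial 1-forms ω. Define I_k = ℓ(x^k y dx) for k ≥ 0. Then for every integer k ≥ 1: ((k+6)/6)·a·I_{k+3} = ((4k+18)/9)·I_{k+2} − ((k+3)/3)·I_{k+1} + (2k/3)·h·I_{k−1}. -/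
open MvPolynomial

theorem stmt_4 (a : ℝ) (ha : a ≠ 0) (h : ℝ)
    (ℓ : OneForm →ₗ[ℝ] ℝ)
    (hexact : ∀ F : MvPolynomial (Fin 2) ℝ, ℓ (pderiv 0 F, pderiv 1 F) = 0)
    (hmul : ∀ ω : OneForm, ℓ (Hpoly a * ω.1, Hpoly a * ω.2) = h * ℓ ω)
    (I : ℕ → ℝ) (hI : ∀ k : ℕ, I k = ℓ ((X 0)^k * X 1, 0)) :
    ∀ k : ℕ, 1 ≤ k →
      (((k : ℝ) + 6)/6) * a * I (k+3)
        = ((4*(k : ℝ) + 18)/9) * I (k+2) - (((k : ℝ) + 3)/3) * I (k+1)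
          + (2*(k : ℝ)/3) * h * I (k-1) := by
  -- the fundamental relation y² = 2H - x² + (4/3)x³ - (a/2)x⁴
  have hrel : (X 1 : MvPolynomial (Fin 2) ℝ)^2
      = C (2:ℝ) * Hpoly a + (C (-1:ℝ) * (X 0)^2 + C (4/3:ℝ) * (X 0)^3 + C (-a/2) * (X 0)^4) := by
    have h2 : (C (2:ℝ) : MvPolynomial (Fin 2) ℝ) * C (1/2:ℝ) = 1 := by rw [← C_mul]; norm_num
    have h3 : (C (2:ℝ) : MvPolynomial (Fin 2) ℝ) * C (2/3:ℝ) = C (4/3:ℝ) := by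
      rw [← C_mul]; norm_num
    have h4 : (C (2:ℝ) : MvPolynomial (Fin 2) ℝ) * C (a/4) = - C (-a/2) := by
      rw [← C_mul, ← C_neg]; congr 1; ring
    have h6 : (C (-1:ℝ) : MvPolynomial (Fin 2) ℝ) = -1 := by simp
    rw [Hpoly, h6]
    linear_combination (-(X 1:MvPolynomial (Fin 2) ℝ)^2 - (X 0)^2) * h2
      + ((X 0:MvPolynomial (Fin 2) ℝ)^3) * h3 + (-((X 0:MvPolynomial (Fin 2) ℝ)^4)) * h4
  -- scalar multiples
  have lC : ∀ (c : ℝ) (P Q : MvPolynomial (Fin 2) ℝ), ℓ (C c * P, C c * Q) = c * ℓ (P, Q) := by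
    intro c P Q
    have hco : ((C c * P, C c * Q) : OneForm) = c • ((P, Q) : OneForm) := by
      simp [Prod.smul_mk, smul_eq_C_mul]
    rw [hco, map_smul, smul_eq_mul]
  have lC0 : ∀ (c : ℝ) (P : MvPolynomial (Fin 2) ℝ), ℓ (C c * P, 0) = c * ℓ (P, 0) := by
    intro c P; simpa using lC c P 0
  have l0C : ∀ (c : ℝ) (Q : MvPolynomial (Fin 2) ℝ), ℓ (0, C c * Q) = c * ℓ (0, Q) := by
    intro c Q; simpa using lC c 0 Q
  -- additivity in each slot
  have laddx : ∀ A B : MvPolynomial (Fin 2) ℝ, ℓ (A + B, 0) = ℓ (A, 0) + ℓ (B, 0) := by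
    intro A B
    have : ((A + B, 0) : OneForm) = (A, 0) + (B, 0) := by simp
    rw [this, map_add]
  have laddy : ∀ A B : MvPolynomial (Fin 2) ℝ, ℓ (0, A + B) = ℓ (0, A) + ℓ (0, B) := by
    intro A B
    have : ((0, A + B) : OneForm) = (0, A) + (0, B) := by simp
    rw [this, map_add]
  have lsplit : ∀ A B : MvPolynomial (Fin 2) ℝ, ℓ (A, B) = ℓ (A, 0) + ℓ (0, B) := by
    intro A B
    have : ((A, B) : OneForm) = (A, 0) + (0, B) := by simp
    rw [this, map_add]
  -- multiplication by H in each slot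
  have lHx : ∀ P : MvPolynomial (Fin 2) ℝ, ℓ (Hpoly a * P, 0) = h * ℓ (P, 0) := by
    intro P
    have := hmul (P, 0)
    simpa using this
  have lHy : ∀ Q : MvPolynomial (Fin 2) ℝ, ℓ (0, Hpoly a * Q) = h * ℓ (0, Q) := by
    intro Q
    have := hmul (0, Q)
    simpa using this
  -- integrals of x^m dy
  have lJ : ∀ m : ℕ, ℓ (0, (X 0)^(m+1)) = -(((m:ℝ)+1) * I m) := by
    intro m
    have hx := hexact ((X 0)^(m+1) * X 1)
    have p0 : pderiv (0 : Fin 2) ((X 0)^(m+1) * X 1 : MvPolynomial (Fin 2) ℝ)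
        = C ((m:ℝ)+1) * ((X 0)^m * X 1) := by
      simp [pderiv_mul]; ring
    have p1 : pderiv (1 : Fin 2) ((X 0)^(m+1) * X 1 : MvPolynomial (Fin 2) ℝ)
        = (X 0)^(m+1) := by
      simp [pderiv_mul]
    rw [p0, p1, lsplit, lC0] at hx
    rw [hI m]
    linarith
  intro k hk
  obtain ⟨n, rfl⟩ : ∃ n, k = n + 1 := ⟨k - 1, (Nat.succ_pred_eq_of_pos hk).symm⟩
  -- the y³ dx computation
  have LA : ℓ ((X 0)^n * (X 1)^3, 0)
      = 2*h*(I n) - I (n+2) + (4/3)*I (n+3) - (a/2)*I (n+4) := by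
    have hid : ((X 0)^n * (X 1)^3 : MvPolynomial (Fin 2) ℝ)
        = Hpoly a * (C (2:ℝ) * ((X 0)^n * X 1))
          + (C (-1:ℝ) * ((X 0)^(n+2) * X 1)
            + (C (4/3:ℝ) * ((X 0)^(n+3) * X 1) + C (-a/2) * ((X 0)^(n+4) * X 1))) := by
      linear_combination ((X 0:MvPolynomial (Fin 2) ℝ)^n * X 1) * hrel
    rw [hid, laddx, laddx, laddx, lHx, lC0, lC0, lC0, lC0,
      ← hI n, ← hI (n+2), ← hI (n+3), ← hI (n+4)]
    ring
  -- the x^(n+1) y² dy computation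
  have LB : ℓ (0, (X 0)^(n+1) * (X 1)^2)
      = -2*h*((n:ℝ)+1)*(I n) + ((n:ℝ)+3)*I (n+2) - (4/3)*((n:ℝ)+4)*I (n+3)
        + (a/2)*((n:ℝ)+5)*I (n+4) := by
    have hid : ((X 0)^(n+1) * (X 1)^2 : MvPolynomial (Fin 2) ℝ)
        = Hpoly a * (C (2:ℝ) * (X 0)^(n+1))
          + (C (-1:ℝ) * (X 0)^(n+3)
            + (C (4/3:ℝ) * (X 0)^(n+4) + C (-a/2) * (X 0)^(n+5))) := by
      linear_combination ((X 0:MvPolynomial (Fin 2) ℝ)^(n+1)) * hrel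
    rw [hid, laddy, laddy, laddy, lHy, l0C, l0C, l0C, l0C,
      lJ n, lJ (n+2), lJ (n+3), lJ (n+4)]
    push_cast
    ring
  -- the exact form d(x^(n+1) y³)
  have E := hexact ((X 0)^(n+1) * (X 1)^3)
  have p0 : pderiv (0 : Fin 2) ((X 0)^(n+1) * (X 1)^3 : MvPolynomial (Fin 2) ℝ)
      = C ((n:ℝ)+1) * ((X 0)^n * (X 1)^3) := by
    simp [pderiv_mul]; ring
  have p1 : pderiv (1 : Fin 2) ((X 0)^(n+1) * (X 1)^3 : MvPolynomial (Fin 2) ℝ)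
      = C (3:ℝ) * ((X 0)^(n+1) * (X 1)^2) := by
    simp [pderiv_mul, map_ofNat]; ring
  rw [p0, p1, lsplit, lC0, l0C, LA, LB] at E
  have hk1 : ((n:ℝ) + 1) - 1 = (n:ℝ) := by ring
  simp only [Nat.add_sub_cancel]
  push_cast
  linear_combination (1/6 : ℝ) * E
end
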